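/- Let n ≥ 2 and let D ⊊ ℝⁿ be an Apollonian domain satisfying α̃_D(x,y) ≤ c₂ j'_D(x,y) for all x, y ∈ D, for some constant c₂ > 1. Let γ ⊂ D be a path joining two points with α_D(γ) = α̃_D of its endpoints, and let u, v be points of γ (in this order along γ) such that d_D(u) ≤ d_D(v), d_D(v) = 2 d_D(u), and d_D(w) ≤ 2 d_D(u) for all w ∈ γ[u,v]. Then diam(γ[u,v]) ≤ 24([c₂]+1) ρ_D(u,v), where [·] denotes the greatest integer part. -/

import Mathlib

/-!
Write `d = d_D(u)`. A subarc of an `α̃_D`-geodesic is again geodesic, so the `α_D`-length `M`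
of `γ[u,v]` is at most `α̃_D(u,v) ≤ c₂ j'_D(u,v) ≤ c₂ ρ_D(u,v) / d`. On the other hand every
point of `γ[u,v]` lies within `2d` of `∂D`, so two of its points at distance at least `6d` are at
Apollonian distance at least `log 4 ≥ 1`; by the intermediate value theorem, a point of `γ[u,v]`
at distance `6dk` from `u` is preceded by a chain of `k` such steps, whence `M ≥ k`. So `γ[u,v]`
lies in the ball of radius `6d(M + 1)` about `u`, and since `d ≤ |u - v| ≤ ρ_D(u,v)`, its
diameter is at most `12(c₂ + 1) ρ_D(u,v) ≤ 24([c₂] + 1) ρ_D(u,v)`.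
-/

open Set Metric Real

noncomputable section

/-- Euclidean `n`-space. -/
abbrev Eucl (n : ℕ) : Type := EuclideanSpace ℝ (Fin n)

/-- A domain: a nonempty, open, connected, proper subset of `ℝⁿ`. -/
def IsDomainIn {n : ℕ} (D : Set (Eucl n)) : Prop :=
  IsOpen D ∧ IsConnected D ∧ D ≠ Set.univ

/-- `D` is Apollonian: its complement is not contained in any hyperplane. -/
def IsApollonian {n : ℕ} (D : Set (Eucl n)) : Prop :=
  ¬ ∃ (x₀ v : Eucl n), v ≠ 0 ∧ ∀ y ∈ Dᶜ, (inner ℝ v (y - x₀) : ℝ) = 0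

/-- Distance from `x` to the boundary `∂D`. -/
def bdist {n : ℕ} (D : Set (Eucl n)) (x : Eucl n) : ℝ :=
  Metric.infDist x (frontier D)

/-- The Apollonian metric `α_D(x,y) = sup_{a,b ∈ ∂D} log (|a-x||b-y| / (|a-y||b-x|))`,
with the convention about `∞` as a boundary point (which occurs exactly when both `D`
and its complement are unbounded): if `a = ∞` the term is `log(|b-y|/|b-x|)`, if `b = ∞`
the term is `log(|a-x|/|a-y|)`, and if both are `∞` the term is `0`. -/
def apol {n : ℕ} (D : Set (Eucl n)) (x y : Eucl n) : ℝ :=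
  sSup ({r | ∃ a ∈ frontier D, ∃ b ∈ frontier D,
          r = Real.log ((dist a x * dist b y) / (dist a y * dist b x))} ∪
        {r | (¬ Bornology.IsBounded D ∧ ¬ Bornology.IsBounded Dᶜ) ∧
          ((∃ b ∈ frontier D, r = Real.log (dist b y / dist b x)) ∨
           (∃ a ∈ frontier D, r = Real.log (dist a x / dist a y)) ∨ r = 0)})

/-- `γ`, restricted to `[0,1]`, is a path in `D` from `x` to `y`. -/
def IsPathIn {n : ℕ} (D : Set (Eucl n)) (x y : Eucl n) (γ : ℝ → Eucl n) : Prop :=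
  ContinuousOn γ (Set.Icc 0 1) ∧ Set.MapsTo γ (Set.Icc 0 1) D ∧ γ 0 = x ∧ γ 1 = y

/-- A path is rectifiable when it has finite Euclidean length. -/
def Rectifiable {n : ℕ} (γ : ℝ → Eucl n) : Prop :=
  eVariationOn γ (Set.Icc 0 1) ≠ ⊤

/-- Euclidean arc length of `γ` over `[a,b]`. -/
def elen {n : ℕ} (γ : ℝ → Eucl n) (a b : ℝ) : ℝ :=
  (eVariationOn γ (Set.Icc a b)).toReal

/-- The `d`-length of the path `γ` over `[a,b]`: the supremum of
`Σ d(γ(t_i), γ(t_{i+1}))` over all partitions `a = t₀ ≤ t₁ ≤ ⋯ ≤ t_k = b`. -/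
def dLength {n : ℕ} (d : Eucl n → Eucl n → ℝ) (γ : ℝ → Eucl n) (a b : ℝ) : ℝ :=
  sSup {s | ∃ (k : ℕ) (t : ℕ → ℝ), Monotone t ∧ t 0 = a ∧ t k = b ∧
        s = ∑ i ∈ Finset.range k, d (γ (t i)) (γ (t (i + 1)))}

/-- The inner metric of `d`: infimum of `d`-lengths of rectifiable paths in `D`
joining `x` and `y`. -/
def innerMetric {n : ℕ} (D : Set (Eucl n)) (d : Eucl n → Eucl n → ℝ) (x y : Eucl n) : ℝ :=
  sInf {L | ∃ γ : ℝ → Eucl n, IsPathIn D x y γ ∧ Rectifiable γ ∧ L = dLength d γ 0 1}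

/-- The Apollonian inner metric `α̃_D`. -/
def innerApol {n : ℕ} (D : Set (Eucl n)) (x y : Eucl n) : ℝ :=
  innerMetric D (apol D) x y

/-- The inner diameter metric `ρ_D(x,y) = inf_γ diam γ`. -/
def rhoD {n : ℕ} (D : Set (Eucl n)) (x y : Eucl n) : ℝ :=
  sInf {L | ∃ γ : ℝ → Eucl n, IsPathIn D x y γ ∧ L = Metric.diam (γ '' Set.Icc 0 1)}

/-- `j'_D(x,y) = log (1 + ρ_D(x,y) / min (d_D(x), d_D(y)))`. -/
def jP {n : ℕ} (D : Set (Eucl n)) (x y : Eucl n) : ℝ :=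
  Real.log (1 + rhoD D x y / min (bdist D x) (bdist D y))

/-- The quasihyperbolic metric `k_D(x,y) = inf_γ ∫_γ |dz|/d_D(z)`. -/
def quasiHyp {n : ℕ} (D : Set (Eucl n)) (x y : Eucl n) : ℝ :=
  sInf {L | ∃ γ : ℝ → Eucl n, IsPathIn D x y γ ∧ DifferentiableOn ℝ γ (Set.Icc 0 1) ∧
        L = ∫ t in (0:ℝ)..1, ‖derivWithin γ (Set.Icc 0 1) t‖ / bdist D (γ t)}

/-- `λ_D(x,y)`: infimum of Euclidean arc lengths of paths in `D` joining `x` and `y`. -/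
def lambdaD {n : ℕ} (D : Set (Eucl n)) (x y : Eucl n) : ℝ :=
  sInf {L | ∃ γ : ℝ → Eucl n, IsPathIn D x y γ ∧ Rectifiable γ ∧ L = elen γ 0 1}

/-- `D` is inner `c`-uniform. -/
def IsInnerUniform {n : ℕ} (D : Set (Eucl n)) (c : ℝ) : Prop :=
  ∀ x ∈ D, ∀ y ∈ D, ∃ γ : ℝ → Eucl n, IsPathIn D x y γ ∧ Rectifiable γ ∧
    (∀ t ∈ Set.Icc (0:ℝ) 1, min (elen γ 0 t) (elen γ t 1) ≤ c * bdist D (γ t)) ∧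
    elen γ 0 1 ≤ c * lambdaD D x y

/-- Condition (4): every pair of points of `D` can be joined by an arc `γ` with
`min(diam γ[x,w], diam γ[y,w]) ≤ c d_D(w)` for all `w ∈ γ` and `diam γ ≤ c ρ_D(x,y)`. -/
def DiamCond {n : ℕ} (D : Set (Eucl n)) (c : ℝ) : Prop :=
  ∀ x ∈ D, ∀ y ∈ D, ∃ γ : ℝ → Eucl n, IsPathIn D x y γ ∧
    (∀ t ∈ Set.Icc (0:ℝ) 1,
      min (Metric.diam (γ '' Set.Icc 0 t)) (Metric.diam (γ '' Set.Icc t 1))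
        ≤ c * bdist D (γ t)) ∧
    Metric.diam (γ '' Set.Icc 0 1) ≤ c * rhoD D x y

section ApollonianMetric

variable {n : ℕ} {D : Set (Eucl n)} {x y z a b : Eucl n}

theorem IsDomainIn.frontier_nonempty (hD : IsDomainIn D) : (frontier D).Nonempty :=
  nonempty_frontier_iff.mpr ⟨hD.2.1.nonempty, hD.2.2⟩

theorem bdist_pos (hD : IsDomainIn D) (hx : x ∈ D) : 0 < bdist D x := by
  refine (isClosed_frontier.notMem_iff_infDist_pos hD.frontier_nonempty).mp fun hxf => ?_
  exact hxf.2 (by rwa [hD.1.interior_eq])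

theorem bdist_le_dist (ha : a ∈ frontier D) (x : Eucl n) : bdist D x ≤ dist a x :=
  dist_comm x a ▸ infDist_le_dist_of_mem ha

theorem dist_pos_of_mem_frontier (hD : IsDomainIn D) (ha : a ∈ frontier D) (hx : x ∈ D) :
    0 < dist a x :=
  (bdist_pos hD hx).trans_le (bdist_le_dist ha x)

theorem log_dist_div_dist_le (hD : IsDomainIn D) (ha : a ∈ frontier D) (hx : x ∈ D)
    (hy : y ∈ D) : log (dist a x / dist a y) ≤ dist x y / bdist D y := by
  have hay := dist_pos_of_mem_frontier hD ha hy
  calc log (dist a x / dist a y) ≤ dist a x / dist a y - 1 :=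
        log_le_sub_one_of_pos (div_pos (dist_pos_of_mem_frontier hD ha hx) hay)
    _ = (dist a x - dist a y) / dist a y := by field_simp
    _ ≤ dist x y / dist a y := by gcongr; linarith [dist_triangle a y x, dist_comm x y]
    _ ≤ dist x y / bdist D y := by gcongr; exacts [bdist_pos hD hy, bdist_le_dist ha y]

-- `apol D x y` is `sSup (apolSet D x y)` by definition.
def apolSet (D : Set (Eucl n)) (x y : Eucl n) : Set ℝ :=
  {r | ∃ a ∈ frontier D, ∃ b ∈ frontier D,
          r = log ((dist a x * dist b y) / (dist a y * dist b x))} ∪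
  {r | (¬ Bornology.IsBounded D ∧ ¬ Bornology.IsBounded Dᶜ) ∧
          ((∃ b ∈ frontier D, r = log (dist b y / dist b x)) ∨
           (∃ a ∈ frontier D, r = log (dist a x / dist a y)) ∨ r = 0)}

theorem zero_mem_apolSet (hD : IsDomainIn D) : (0 : ℝ) ∈ apolSet D x y := by
  obtain ⟨a, ha⟩ := hD.frontier_nonempty
  refine Or.inl ⟨a, ha, a, ha, ?_⟩
  by_cases h : dist a y * dist a x = 0 <;> simp [mul_comm (dist a x), h]

theorem le_of_mem_apolSet (hD : IsDomainIn D) (hx : x ∈ D) (hy : y ∈ D) :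
    ∀ r ∈ apolSet D x y, r ≤ dist x y / bdist D x + dist x y / bdist D y := by
  have h0x : 0 ≤ dist x y / bdist D x := div_nonneg dist_nonneg (bdist_pos hD hx).le
  have h0y : 0 ≤ dist x y / bdist D y := div_nonneg dist_nonneg (bdist_pos hD hy).le
  rintro r (⟨a, ha, b, hb, rfl⟩ | ⟨-, (⟨b, hb, rfl⟩ | ⟨a, ha, rfl⟩ | rfl)⟩)
  · have hax := dist_pos_of_mem_frontier hD ha hx
    have hay := dist_pos_of_mem_frontier hD ha hy
    have hbx := dist_pos_of_mem_frontier hD hb hx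
    have hby := dist_pos_of_mem_frontier hD hb hy
    rw [mul_div_mul_comm, log_mul (by positivity) (by positivity), add_comm]
    gcongr
    · exact dist_comm x y ▸ log_dist_div_dist_le hD hb hy hx
    · exact log_dist_div_dist_le hD ha hx hy
  · linarith [dist_comm x y ▸ log_dist_div_dist_le hD hb hy hx]
  · linarith [log_dist_div_dist_le hD ha hx hy]
  · positivity

theorem bddAbove_apolSet (hD : IsDomainIn D) (hx : x ∈ D) (hy : y ∈ D) :
    BddAbove (apolSet D x y) :=
  ⟨_, le_of_mem_apolSet hD hx hy⟩

theorem apol_nonneg (hD : IsDomainIn D) (hx : x ∈ D) (hy : y ∈ D) : 0 ≤ apol D x y :=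
  le_csSup (bddAbove_apolSet hD hx hy) (zero_mem_apolSet hD)

theorem apol_le (hD : IsDomainIn D) (hx : x ∈ D) (hy : y ∈ D) :
    apol D x y ≤ dist x y / bdist D x + dist x y / bdist D y :=
  csSup_le ⟨0, zero_mem_apolSet hD⟩ (le_of_mem_apolSet hD hx hy)

theorem apol_self (hD : IsDomainIn D) (hx : x ∈ D) : apol D x x = 0 :=
  le_antisymm (by simpa using apol_le hD hx hx) (apol_nonneg hD hx hx)

theorem log_le_apol (hD : IsDomainIn D) (hx : x ∈ D) (hy : y ∈ D) (ha : a ∈ frontier D)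
    (hb : b ∈ frontier D) : log ((dist a x * dist b y) / (dist a y * dist b x)) ≤ apol D x y :=
  le_csSup (bddAbove_apolSet hD hx hy) (Or.inl ⟨a, ha, b, hb, rfl⟩)

theorem apol_triangle (hD : IsDomainIn D) (hx : x ∈ D) (hy : y ∈ D) (hz : z ∈ D) :
    apol D x z ≤ apol D x y + apol D y z := by
  have bxy := bddAbove_apolSet hD hx hy
  have byz := bddAbove_apolSet hD hy hz
  refine csSup_le ⟨0, zero_mem_apolSet hD⟩ ?_
  rintro r (⟨a, ha, b, hb, rfl⟩ | ⟨hP, (⟨b, hb, rfl⟩ | ⟨a, ha, rfl⟩ | rfl)⟩)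
  · have := dist_pos_of_mem_frontier hD ha hx
    have := dist_pos_of_mem_frontier hD ha hy
    have := dist_pos_of_mem_frontier hD ha hz
    have := dist_pos_of_mem_frontier hD hb hx
    have := dist_pos_of_mem_frontier hD hb hy
    have := dist_pos_of_mem_frontier hD hb hz
    calc _ = log ((dist a x * dist b y) / (dist a y * dist b x))
          + log ((dist a y * dist b z) / (dist a z * dist b y)) := by
          rw [← log_mul (by positivity) (by positivity)]; congr 1; field_simp
      _ ≤ _ := add_le_add (log_le_apol hD hx hy ha hb) (log_le_apol hD hy hz ha hb)
  · have := dist_pos_of_mem_frontier hD hb hx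
    have := dist_pos_of_mem_frontier hD hb hy
    have := dist_pos_of_mem_frontier hD hb hz
    calc _ = log (dist b y / dist b x) + log (dist b z / dist b y) := by
          rw [← log_mul (by positivity) (by positivity)]; congr 1; field_simp
      _ ≤ _ := add_le_add (le_csSup bxy (Or.inr ⟨hP, Or.inl ⟨b, hb, rfl⟩⟩))
          (le_csSup byz (Or.inr ⟨hP, Or.inl ⟨b, hb, rfl⟩⟩))
  · have := dist_pos_of_mem_frontier hD ha hx
    have := dist_pos_of_mem_frontier hD ha hy
    have := dist_pos_of_mem_frontier hD ha hz
    calc _ = log (dist a x / dist a y) + log (dist a y / dist a z) := by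
          rw [← log_mul (by positivity) (by positivity)]; congr 1; field_simp
      _ ≤ _ := add_le_add (le_csSup bxy (Or.inr ⟨hP, Or.inr (Or.inl ⟨a, ha, rfl⟩)⟩))
          (le_csSup byz (Or.inr ⟨hP, Or.inr (Or.inl ⟨a, ha, rfl⟩)⟩))
  · exact add_nonneg (apol_nonneg hD hx hy) (apol_nonneg hD hy hz)

theorem log_four_le_apol (hD : IsDomainIn D) (hx : x ∈ D) (hy : y ∈ D) {δ : ℝ}
    (hδx : bdist D x ≤ δ) (hδy : bdist D y ≤ δ) (hxy : 3 * δ ≤ dist x y) :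
    log 4 ≤ apol D x y := by
  obtain ⟨b, hb, hbx⟩ := isClosed_frontier.exists_infDist_eq_dist hD.frontier_nonempty x
  obtain ⟨a, ha, hay⟩ := isClosed_frontier.exists_infDist_eq_dist hD.frontier_nonempty y
  have hδ : 0 < δ := (bdist_pos hD hx).trans_le hδx
  have hay_pos := dist_pos_of_mem_frontier hD ha hy
  have hbx_pos := dist_pos_of_mem_frontier hD hb hx
  have hay_le : dist a y ≤ δ := by rw [dist_comm, ← hay]; exact hδy
  have hbx_le : dist b x ≤ δ := by rw [dist_comm, ← hbx]; exact hδx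
  have hax : 2 * δ ≤ dist a x := by linarith [dist_triangle_left x y a]
  have hby : 2 * δ ≤ dist b y := by linarith [dist_triangle_left y x b, dist_comm x y]
  refine le_trans ?_ (log_le_apol hD hx hy ha hb)
  gcongr
  rw [le_div_iff₀ (by positivity)]
  nlinarith [mul_le_mul hay_le hbx_le hbx_pos.le hδ.le,
    mul_le_mul hax hby (by positivity) (by linarith)]

end ApollonianMetric

section PartitionLength

variable {n : ℕ} {d : Eucl n → Eucl n → ℝ} {γ : ℝ → Eucl n} {a b c : ℝ}

def partitionSums (d : Eucl n → Eucl n → ℝ) (γ : ℝ → Eucl n) (a b : ℝ) : Set ℝ :=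
  {s | ∃ (k : ℕ) (t : ℕ → ℝ), Monotone t ∧ t 0 = a ∧ t k = b ∧
        s = ∑ i ∈ Finset.range k, d (γ (t i)) (γ (t (i + 1)))}

theorem dLength_eq_sSup_partitionSums : dLength d γ a b = sSup (partitionSums d γ a b) := rfl

theorem mem_Icc_of_partition {t : ℕ → ℝ} {k i : ℕ} (ht : Monotone t) (h0 : t 0 = a)
    (hk : t k = b) (hi : i ≤ k) : t i ∈ Icc a b :=
  ⟨h0 ▸ ht (Nat.zero_le i), hk ▸ ht hi⟩

theorem apply_mem_partitionSums (hab : a ≤ b) : d (γ a) (γ b) ∈ partitionSums d γ a b := by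
  refine ⟨1, fun i => if i = 0 then a else b, fun i j hij => ?_, by simp, by simp, by simp⟩
  dsimp only
  split_ifs <;> first | exact le_rfl | exact hab | omega

theorem le_dLength (hab : a ≤ b) (hbdd : BddAbove (partitionSums d γ a b)) :
    d (γ a) (γ b) ≤ dLength d γ a b :=
  le_csSup hbdd (apply_mem_partitionSums hab)

theorem add_mem_partitionSums {s₁ s₂ : ℝ} (h₁ : s₁ ∈ partitionSums d γ a b)
    (h₂ : s₂ ∈ partitionSums d γ b c) : s₁ + s₂ ∈ partitionSums d γ a c := by
  obtain ⟨k₁, t₁, hm₁, h0₁, hk₁, rfl⟩ := h₁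
  obtain ⟨k₂, t₂, hm₂, h0₂, hk₂, rfl⟩ := h₂
  set u : ℕ → ℝ := fun i => if i ≤ k₁ then t₁ i else t₂ (i - k₁) with hu
  have hu_add : ∀ i, u (k₁ + i) = t₂ i := by
    rintro (_ | i)
    · simp [hu, hk₁, h0₂]
    · simp [hu]
  refine ⟨k₁ + k₂, u, fun i j hij => ?_, by simp [hu, h0₁], by rw [hu_add, hk₂], ?_⟩
  · simp only [hu]
    split_ifs with hi hj hj
    · exact hm₁ hij
    · exact (hm₁ hi).trans (hk₁.trans h0₂.symm ▸ hm₂ (Nat.zero_le _))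
    · omega
    · exact hm₂ (by omega)
  · rw [Finset.sum_range_add]
    congr 1
    · refine Finset.sum_congr rfl fun i hi => ?_
      have hi := Finset.mem_range.mp hi
      simp [hu, hi.le, Nat.succ_le_of_lt hi]
    · simp only [add_assoc, hu_add]

theorem dLength_add_dLength_le (hab : a ≤ b) (hbc : b ≤ c)
    (hbdd : BddAbove (partitionSums d γ a c)) :
    dLength d γ a b + dLength d γ b c ≤ dLength d γ a c := by
  simp only [dLength_eq_sSup_partitionSums]
  rw [← le_sub_iff_add_le]
  refine csSup_le ⟨_, apply_mem_partitionSums hab⟩ fun s₁ hs₁ => ?_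
  rw [le_sub_comm]
  refine csSup_le ⟨_, apply_mem_partitionSums hbc⟩ fun s₂ hs₂ => ?_
  rw [le_sub_iff_add_le']
  exact le_csSup hbdd (add_mem_partitionSums hs₁ hs₂)

theorem dLength_le_add_dLength (hab : a ≤ b) (hbc : b ≤ c)
    (htri : ∀ p ∈ Icc a b, ∀ q ∈ Icc b c, d (γ p) (γ q) ≤ d (γ p) (γ b) + d (γ b) (γ q))
    (hself : d (γ b) (γ b) = 0)
    (hbdd₁ : BddAbove (partitionSums d γ a b)) (hbdd₂ : BddAbove (partitionSums d γ b c)) :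
    dLength d γ a c ≤ dLength d γ a b + dLength d γ b c := by
  refine csSup_le ⟨_, apply_mem_partitionSums (hab.trans hbc)⟩ ?_
  rintro _ ⟨k, t, hmono, h0, hk, rfl⟩
  have hmin : (∑ i ∈ Finset.range k, d (γ (min (t i) b)) (γ (min (t (i + 1)) b)))
      ∈ partitionSums d γ a b :=
    ⟨k, fun i => min (t i) b, fun i j hij => min_le_min_right b (hmono hij),
      by simp [h0, hab], by simp [hk, hbc], rfl⟩
  have hmax : (∑ i ∈ Finset.range k, d (γ (max (t i) b)) (γ (max (t (i + 1)) b)))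
      ∈ partitionSums d γ b c :=
    ⟨k, fun i => max (t i) b, fun i j hij => max_le_max_right b (hmono hij),
      by simp [h0, hab], by simp [hk, hbc], rfl⟩
  refine le_trans ?_ (add_le_add (le_csSup hbdd₁ hmin) (le_csSup hbdd₂ hmax))
  rw [← Finset.sum_add_distrib]
  refine Finset.sum_le_sum fun i hi => ?_
  have hi := Finset.mem_range.mp hi
  have hti := mem_Icc_of_partition hmono h0 hk hi.le
  have hti' := mem_Icc_of_partition hmono h0 hk hi
  have hle : t i ≤ t (i + 1) := hmono (Nat.le_succ i)
  rcases le_total (t (i + 1)) b with h | h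
  · simp [h, hle.trans h, hself]
  rcases le_total b (t i) with h' | h'
  · simp [h, h', hself]
  · simpa [h, h'] using htri _ ⟨hti.1, h'⟩ _ ⟨h, hti'.2⟩

theorem dLength_le_of_eqOn_comp {g : ℝ → Eucl n} {φ : ℝ → ℝ} {a' b' : ℝ} (hab : a ≤ b)
    (hφ : Monotone φ) (ha : φ a = a') (hb : φ b = b') (heq : EqOn γ (g ∘ φ) (Icc a b))
    (hbdd : BddAbove (partitionSums d g a' b')) :
    dLength d γ a b ≤ dLength d g a' b' := by
  refine csSup_le ⟨_, apply_mem_partitionSums hab⟩ ?_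
  rintro _ ⟨k, t, hmono, h0, hk, rfl⟩
  refine le_csSup hbdd ⟨k, φ ∘ t, hφ.comp hmono, by simp [h0, ha], by simp [hk, hb], ?_⟩
  refine Finset.sum_congr rfl fun i hi => ?_
  have hi := Finset.mem_range.mp hi
  rw [heq (mem_Icc_of_partition hmono h0 hk hi.le), heq (mem_Icc_of_partition hmono h0 hk hi)]
  rfl

end PartitionLength

theorem sum_dist_le_eVariationOn {E : Type*} [PseudoMetricSpace E] {f : ℝ → E} {a b : ℝ}
    {k : ℕ} {t : ℕ → ℝ} (hmono : Monotone t) (h0 : t 0 = a) (hk : t k = b)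
    (hfin : eVariationOn f (Icc a b) ≠ ⊤) :
    ∑ i ∈ Finset.range k, dist (f (t i)) (f (t (i + 1))) ≤ (eVariationOn f (Icc a b)).toReal := by
  have key := eVariationOn.sum_le (f := f) (n := k) (u := fun i => t (min i k))
    (hmono.comp fun i j hij => min_le_min_right k hij)
    fun i => mem_Icc_of_partition hmono h0 hk (min_le_right i k)
  rw [← ENNReal.toReal_le_toReal (ENNReal.sum_ne_top.2 fun _ _ => edist_ne_top _ _) hfin,
    ENNReal.toReal_sum fun _ _ => edist_ne_top _ _] at key
  refine le_of_eq_of_le (Finset.sum_congr rfl fun i hi => ?_) key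
  have hi := Finset.mem_range.mp hi
  simp [min_eq_left hi.le, min_eq_left (Nat.succ_le_of_lt hi), dist_edist, edist_comm]

section PathsInDomain

variable {n : ℕ} {D : Set (Eucl n)} {x y : Eucl n} {γ : ℝ → Eucl n} {a b : ℝ}

theorem Rectifiable.eVariationOn_ne_top (hrec : Rectifiable γ) (ha : 0 ≤ a) (hb : b ≤ 1) :
    eVariationOn γ (Icc a b) ≠ ⊤ :=
  ne_top_of_le_ne_top hrec (eVariationOn.mono γ (Icc_subset_Icc ha hb))

theorem IsPathIn.exists_pos_le_bdist (hD : IsDomainIn D) (hγ : IsPathIn D x y γ) :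
    ∃ δ > 0, ∀ r ∈ Icc (0 : ℝ) 1, δ ≤ bdist D (γ r) := by
  obtain ⟨r₀, hr₀, hmin⟩ := isCompact_Icc.exists_isMinOn (nonempty_Icc.2 zero_le_one)
    ((continuous_infDist_pt (frontier D)).comp_continuousOn hγ.1)
  exact ⟨_, bdist_pos hD (hγ.2.1 hr₀), fun r hr => hmin hr⟩

theorem IsPathIn.bddAbove_partitionSums_apol (hD : IsDomainIn D) (hγ : IsPathIn D x y γ)
    (hrec : Rectifiable γ) (ha : 0 ≤ a) (hb : b ≤ 1) :
    BddAbove (partitionSums (apol D) γ a b) := by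
  obtain ⟨δ, hδ, hδle⟩ := hγ.exists_pos_le_bdist hD
  refine ⟨2 / δ * (eVariationOn γ (Icc a b)).toReal, ?_⟩
  rintro _ ⟨k, t, hmono, h0, hk, rfl⟩
  have hterm : ∀ i ∈ Finset.range k,
      apol D (γ (t i)) (γ (t (i + 1))) ≤ 2 / δ * dist (γ (t i)) (γ (t (i + 1))) := by
    intro i hi
    have hi := Finset.mem_range.mp hi
    have hti := Icc_subset_Icc ha hb (mem_Icc_of_partition hmono h0 hk hi.le)
    have hti' := Icc_subset_Icc ha hb (mem_Icc_of_partition hmono h0 hk hi)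
    calc apol D (γ (t i)) (γ (t (i + 1)))
        ≤ dist (γ (t i)) (γ (t (i + 1))) / bdist D (γ (t i))
          + dist (γ (t i)) (γ (t (i + 1))) / bdist D (γ (t (i + 1))) :=
          apol_le hD (hγ.2.1 hti) (hγ.2.1 hti')
      _ ≤ dist (γ (t i)) (γ (t (i + 1))) / δ + dist (γ (t i)) (γ (t (i + 1))) / δ := by
          gcongr <;> exact hδle _ ‹_›
      _ = 2 / δ * dist (γ (t i)) (γ (t (i + 1))) := by ring
  calc _ ≤ ∑ i ∈ Finset.range k, 2 / δ * dist (γ (t i)) (γ (t (i + 1))) :=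
        Finset.sum_le_sum hterm
    _ ≤ _ := by
        rw [← Finset.mul_sum]
        gcongr
        exact sum_dist_le_eVariationOn hmono h0 hk (hrec.eVariationOn_ne_top ha hb)

theorem IsPathIn.dLength_apol_nonneg (hD : IsDomainIn D) (hγ : IsPathIn D x y γ)
    (hrec : Rectifiable γ) (ha : 0 ≤ a) (hab : a ≤ b) (hb : b ≤ 1) :
    0 ≤ dLength (apol D) γ a b :=
  (apol_nonneg hD (hγ.2.1 ⟨ha, hab.trans hb⟩) (hγ.2.1 ⟨ha.trans hab, hb⟩)).trans
    (le_dLength hab (hγ.bddAbove_partitionSums_apol hD hrec ha hb))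

theorem IsPathIn.innerApol_le (hD : IsDomainIn D) (hγ : IsPathIn D x y γ)
    (hrec : Rectifiable γ) : innerApol D x y ≤ dLength (apol D) γ 0 1 := by
  have hbdd : BddBelow {L | ∃ σ, IsPathIn D x y σ ∧ Rectifiable σ ∧
      L = dLength (apol D) σ 0 1} := by
    refine ⟨0, ?_⟩
    rintro _ ⟨σ, hσ, hσrec, rfl⟩
    exact hσ.dLength_apol_nonneg hD hσrec le_rfl zero_le_one le_rfl
  exact csInf_le hbdd ⟨γ, hγ, hrec, rfl⟩

theorem IsPathIn.dist_le_rhoD (hγ : IsPathIn D x y γ) : dist x y ≤ rhoD D x y := by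
  refine le_csInf ⟨_, γ, hγ, rfl⟩ ?_
  rintro _ ⟨σ, ⟨hσc, -, rfl, rfl⟩, rfl⟩
  exact dist_le_diam_of_mem (isCompact_Icc.image_of_continuousOn hσc).isBounded
    (mem_image_of_mem σ (left_mem_Icc.2 zero_le_one))
    (mem_image_of_mem σ (right_mem_Icc.2 zero_le_one))

theorem IsPathIn.bdist_sub_bdist_le_rhoD (hγ : IsPathIn D x y γ) :
    bdist D y - bdist D x ≤ rhoD D x y := by
  have : bdist D y ≤ bdist D x + dist y x := infDist_le_infDist_add_dist
  linarith [hγ.dist_le_rhoD, dist_comm x y]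

theorem jP_le_rhoD_div (hxy : bdist D x ≤ bdist D y) (hx : 0 < bdist D x)
    (hρ : 0 ≤ rhoD D x y) : jP D x y ≤ rhoD D x y / bdist D x := by
  rw [jP, min_eq_left hxy]
  linarith [log_le_sub_one_of_pos (add_pos_of_pos_of_nonneg one_pos (div_nonneg hρ hx.le))]

end PathsInDomain

section Splicing

variable {n : ℕ} {D : Set (Eucl n)} {x y : Eucl n} {γ σ : ℝ → Eucl n} {s t : ℝ}

theorem mapsTo_add_mul_sub_Icc (hst : s ≤ t) :
    MapsTo (fun r : ℝ => s + r * (t - s)) (Icc 0 1) (Icc s t) := by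
  intro r hr
  have := mul_le_of_le_one_left (sub_nonneg.2 hst) hr.2
  exact ⟨le_add_of_nonneg_right (mul_nonneg hr.1 (sub_nonneg.2 hst)), by linarith⟩

theorem monotone_add_mul_sub (hst : s ≤ t) : Monotone fun r : ℝ => s + r * (t - s) :=
  fun _ _ hpq => by
    have := mul_le_mul_of_nonneg_right hpq (sub_nonneg.2 hst)
    dsimp only
    linarith

theorem mapsTo_sub_div_sub_Icc (hst : s < t) :
    MapsTo (fun r : ℝ => (r - s) / (t - s)) (Icc s t) (Icc 0 1) := fun _ hr =>
  ⟨div_nonneg (sub_nonneg.2 hr.1) (sub_nonneg.2 hst.le),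
    (div_le_one (sub_pos.2 hst)).2 (sub_le_sub_right hr.2 s)⟩

theorem monotone_sub_div_sub (hst : s < t) : Monotone fun r : ℝ => (r - s) / (t - s) :=
  fun _ _ hpq => div_le_div_of_nonneg_right (sub_le_sub_right hpq s) (sub_nonneg.2 hst.le)

def subpath (γ : ℝ → Eucl n) (s t : ℝ) : ℝ → Eucl n := fun r => γ (s + r * (t - s))

theorem isPathIn_subpath (hγ : IsPathIn D x y γ) (hs : 0 ≤ s) (hst : s ≤ t) (ht : t ≤ 1) :
    IsPathIn D (γ s) (γ t) (subpath γ s t) := by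
  have hmaps := (mapsTo_add_mul_sub_Icc hst).mono_right (Icc_subset_Icc hs ht)
  exact ⟨hγ.1.comp (by fun_prop) hmaps, hγ.2.1.comp hmaps, by simp [subpath], by simp [subpath]⟩

theorem rectifiable_subpath (hrec : Rectifiable γ) (hs : 0 ≤ s) (hst : s ≤ t) (ht : t ≤ 1) :
    Rectifiable (subpath γ s t) :=
  ne_top_of_le_ne_top hrec (eVariationOn.comp_le_of_monotoneOn γ _
    ((monotone_add_mul_sub hst).monotoneOn _)
    ((mapsTo_add_mul_sub_Icc hst).mono_right (Icc_subset_Icc hs ht)))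

def splice (γ σ : ℝ → Eucl n) (s t : ℝ) : ℝ → Eucl n :=
  fun r => if r ∈ Icc s t then σ ((r - s) / (t - s)) else γ r

theorem splice_eqOn_Iic (hσ₀ : σ 0 = γ s) : EqOn (splice γ σ s t) γ (Iic s) := by
  intro r hr
  by_cases h : r ∈ Icc s t
  · obtain rfl : r = s := le_antisymm hr h.1
    simp [splice, h, hσ₀]
  · simp [splice, h]

theorem splice_eqOn_Ici (hst : s < t) (hσ₁ : σ 1 = γ t) : EqOn (splice γ σ s t) γ (Ici t) := by
  intro r hr
  by_cases h : r ∈ Icc s t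
  · obtain rfl : r = t := le_antisymm h.2 hr
    simp [splice, h, div_self (sub_pos.2 hst).ne', hσ₁]
  · simp [splice, h]

theorem splice_eqOn_Icc :
    EqOn (splice γ σ s t) (σ ∘ fun r => (r - s) / (t - s)) (Icc s t) := by
  intro r hr
  simp [splice, hr]

theorem isPathIn_splice (hγ : IsPathIn D x y γ) (hσ : IsPathIn D (γ s) (γ t) σ) (hs : 0 ≤ s)
    (hst : s < t) (ht : t ≤ 1) : IsPathIn D x y (splice γ σ s t) := by
  obtain ⟨hσc, hσm, hσ₀, hσ₁⟩ := hσ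
  refine ⟨?_, fun r hr => ?_, (splice_eqOn_Iic hσ₀ hs).trans hγ.2.2.1,
    (splice_eqOn_Ici hst hσ₁ ht).trans hγ.2.2.2⟩
  · rw [← Icc_union_Icc_eq_Icc hs (hst.le.trans ht), ← Icc_union_Icc_eq_Icc hst.le ht]
    refine .union_of_isClosed ?_ (.union_of_isClosed ?_ ?_ isClosed_Icc isClosed_Icc)
      isClosed_Icc (isClosed_Icc.union isClosed_Icc)
    · exact (hγ.1.mono (Icc_subset_Icc le_rfl (hst.le.trans ht))).congr
        ((splice_eqOn_Iic hσ₀).mono Icc_subset_Iic_self)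
    · exact (hσc.comp (by fun_prop) (mapsTo_sub_div_sub_Icc hst)).congr splice_eqOn_Icc
    · exact (hγ.1.mono (Icc_subset_Icc (hs.trans hst.le) le_rfl)).congr
        ((splice_eqOn_Ici hst hσ₁).mono Icc_subset_Ici_self)
  · by_cases h : r ∈ Icc s t
    · simpa [splice, h] using hσm (mapsTo_sub_div_sub_Icc hst h)
    · simpa [splice, h] using hγ.2.1 hr

theorem rectifiable_splice (hrec : Rectifiable γ) (hσrec : Rectifiable σ) (hs : 0 ≤ s)
    (hst : s < t) (ht : t ≤ 1) (hσ₀ : σ 0 = γ s) (hσ₁ : σ 1 = γ t) :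
    Rectifiable (splice γ σ s t) := by
  have h₁ := eVariationOn.Icc_add_Icc (splice γ σ s t) (s := univ) hs (hst.le.trans ht)
    (mem_univ _)
  have h₂ := eVariationOn.Icc_add_Icc (splice γ σ s t) (s := univ) hst.le ht (mem_univ _)
  simp only [univ_inter] at h₁ h₂
  rw [Rectifiable, ← h₁, ← h₂, eVariationOn.eq_of_eqOn splice_eqOn_Icc,
    eVariationOn.eq_of_eqOn ((splice_eqOn_Iic hσ₀).mono Icc_subset_Iic_self),
    eVariationOn.eq_of_eqOn ((splice_eqOn_Ici hst hσ₁).mono Icc_subset_Ici_self)]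
  refine ENNReal.add_ne_top.2 ⟨hrec.eVariationOn_ne_top le_rfl (hst.le.trans ht),
    ENNReal.add_ne_top.2 ⟨ne_top_of_le_ne_top hσrec ?_, hrec.eVariationOn_ne_top
      (hs.trans hst.le) le_rfl⟩⟩
  exact eVariationOn.comp_le_of_monotoneOn σ _ ((monotone_sub_div_sub hst).monotoneOn _)
    (mapsTo_sub_div_sub_Icc hst)

end Splicing

section Geodesic

variable {n : ℕ} {D : Set (Eucl n)} {x y : Eucl n} {γ σ : ℝ → Eucl n} {s t : ℝ}

theorem dLength_apol_splice_le (hD : IsDomainIn D) (hγ : IsPathIn D x y γ)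
    (hσ : IsPathIn D (γ s) (γ t) σ) (hrec : Rectifiable γ) (hσrec : Rectifiable σ)
    (hs : 0 ≤ s) (hst : s < t) (ht : t ≤ 1) :
    dLength (apol D) (splice γ σ s t) 0 1
      ≤ dLength (apol D) γ 0 s + dLength (apol D) σ 0 1 + dLength (apol D) γ t 1 := by
  set τ := splice γ σ s t
  have hτ : IsPathIn D x y τ := isPathIn_splice hγ hσ hs hst ht
  have hτrec : Rectifiable τ := rectifiable_splice hrec hσrec hs hst ht hσ.2.2.1 hσ.2.2.2
  have hbdd {a b : ℝ} (ha : 0 ≤ a) (hb : b ≤ 1) := hτ.bddAbove_partitionSums_apol hD hτrec ha hb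
  have htri {p c q : ℝ} (hp : p ∈ Icc (0 : ℝ) 1) (hc : c ∈ Icc (0 : ℝ) 1)
      (hq : q ∈ Icc (0 : ℝ) 1) : apol D (τ p) (τ q) ≤ apol D (τ p) (τ c) + apol D (τ c) (τ q) :=
    apol_triangle hD (hτ.2.1 hp) (hτ.2.1 hc) (hτ.2.1 hq)
  have hs₁ : s ∈ Icc (0 : ℝ) 1 := ⟨hs, hst.le.trans ht⟩
  have ht₁ : t ∈ Icc (0 : ℝ) 1 := ⟨hs.trans hst.le, ht⟩
  calc dLength (apol D) τ 0 1
      ≤ dLength (apol D) τ 0 s + dLength (apol D) τ s 1 :=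
        dLength_le_add_dLength hs hs₁.2
          (fun p hp q hq => htri ⟨hp.1, hp.2.trans hs₁.2⟩ hs₁ ⟨hs.trans hq.1, hq.2⟩)
          (apol_self hD (hτ.2.1 hs₁)) (hbdd le_rfl hs₁.2) (hbdd hs le_rfl)
    _ ≤ dLength (apol D) τ 0 s + (dLength (apol D) τ s t + dLength (apol D) τ t 1) := by
        gcongr
        exact dLength_le_add_dLength hst.le ht
          (fun p hp q hq => htri ⟨hs.trans hp.1, hp.2.trans ht⟩ ht₁ ⟨ht₁.1.trans hq.1, hq.2⟩)
          (apol_self hD (hτ.2.1 ht₁)) (hbdd hs ht) (hbdd ht₁.1 le_rfl)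
    _ ≤ dLength (apol D) γ 0 s + (dLength (apol D) σ 0 1 + dLength (apol D) γ t 1) := by
        gcongr
        · exact dLength_le_of_eqOn_comp hs monotone_id rfl rfl
            ((splice_eqOn_Iic hσ.2.2.1).mono Icc_subset_Iic_self)
            (hγ.bddAbove_partitionSums_apol hD hrec le_rfl hs₁.2)
        · exact dLength_le_of_eqOn_comp hst.le (monotone_sub_div_sub hst) (by simp)
            (div_self (sub_pos.2 hst).ne') splice_eqOn_Icc
            (hσ.bddAbove_partitionSums_apol hD hσrec le_rfl le_rfl)
        · exact dLength_le_of_eqOn_comp ht monotone_id rfl rfl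
            ((splice_eqOn_Ici hst hσ.2.2.2).mono Icc_subset_Ici_self)
            (hγ.bddAbove_partitionSums_apol hD hrec ht₁.1 le_rfl)
    _ = _ := (add_assoc _ _ _).symm

theorem IsPathIn.dLength_apol_le_innerApol (hD : IsDomainIn D) (hγ : IsPathIn D x y γ)
    (hrec : Rectifiable γ) (hopt : dLength (apol D) γ 0 1 = innerApol D x y) (hs : 0 ≤ s)
    (hst : s < t) (ht : t ≤ 1) : dLength (apol D) γ s t ≤ innerApol D (γ s) (γ t) := by
  refine le_csInf ⟨_, subpath γ s t, isPathIn_subpath hγ hs hst.le ht,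
    rectifiable_subpath hrec hs hst.le ht, rfl⟩ ?_
  rintro _ ⟨σ, hσ, hσrec, rfl⟩
  -- splicing `σ` into `γ` in place of its arc over `[s, t]` gives a competitor for `α̃_D(x, y)`
  have hcompetitor := (isPathIn_splice hγ hσ hs hst ht).innerApol_le hD
    (rectifiable_splice hrec hσrec hs hst ht hσ.2.2.1 hσ.2.2.2)
  have hsplice := dLength_apol_splice_le hD hγ hσ hrec hσrec hs hst ht
  have h₁ := dLength_add_dLength_le (d := apol D) hs hst.le
    (hγ.bddAbove_partitionSums_apol hD hrec le_rfl ht)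
  have h₂ := dLength_add_dLength_le (d := apol D) (hs.trans hst.le) ht
    (hγ.bddAbove_partitionSums_apol hD hrec le_rfl le_rfl)
  linarith

end Geodesic

section Chain

variable {n : ℕ} {D : Set (Eucl n)} {x y : Eucl n} {γ : ℝ → Eucl n} {s t δ : ℝ}

theorem IsPathIn.nat_mul_log_four_le_dLength_apol (hD : IsDomainIn D) (hγ : IsPathIn D x y γ)
    (hrec : Rectifiable γ) (hs : 0 ≤ s) (ht : t ≤ 1) (hδ : ∀ r ∈ Icc s t, bdist D (γ r) ≤ δ)
    (k : ℕ) : ∀ r ∈ Icc s t, k * (3 * δ) ≤ dist (γ s) (γ r) →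
      k * log 4 ≤ dLength (apol D) γ s r := by
  induction k with
  | zero =>
    intro r hr _
    simpa using hγ.dLength_apol_nonneg hD hrec hs hr.1 (hr.2.trans ht)
  | succ k ih =>
    intro r hr hkr
    have hsub : Icc s r ⊆ Icc 0 1 := Icc_subset_Icc hs (hr.2.trans ht)
    have hδ₀ : 0 ≤ δ := (bdist_pos hD (hγ.2.1 (hsub ⟨le_rfl, hr.1⟩))).le.trans
      (hδ s ⟨le_rfl, hr.1.trans hr.2⟩)
    obtain ⟨r', hr', hr'dist⟩ : ∃ r' ∈ Icc s r, dist (γ s) (γ r') = k * (3 * δ) := by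
      refine intermediate_value_Icc hr.1
        ((continuous_const.dist continuous_id).comp_continuousOn (hγ.1.mono hsub)) ⟨?_, ?_⟩
      · simp only [Function.comp_apply, id_eq, dist_self]
        positivity
      · push_cast at hkr
        simp only [Function.comp_apply, id_eq]
        nlinarith
    have hstep : log 4 ≤ apol D (γ r') (γ r) := by
      refine log_four_le_apol hD (hγ.2.1 (hsub hr')) (hγ.2.1 (hsub ⟨hr.1, le_rfl⟩))
        (hδ r' ⟨hr'.1, hr'.2.trans hr.2⟩) (hδ r hr) ?_
      push_cast at hkr
      linarith [dist_triangle (γ s) (γ r') (γ r)]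
    have hbdd {a b : ℝ} (ha : 0 ≤ a) (hb : b ≤ 1) := hγ.bddAbove_partitionSums_apol hD hrec ha hb
    calc ((k + 1 : ℕ) : ℝ) * log 4 = k * log 4 + log 4 := by push_cast; ring
      _ ≤ dLength (apol D) γ s r' + dLength (apol D) γ r' r :=
        add_le_add (ih r' ⟨hr'.1, hr'.2.trans hr.2⟩ hr'dist.ge)
          (hstep.trans (le_dLength hr'.2 (hbdd (hs.trans hr'.1) (hr.2.trans ht))))
      _ ≤ dLength (apol D) γ s r :=
        dLength_add_dLength_le hr'.1 hr'.2 (hbdd hs (hr.2.trans ht))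

theorem one_le_log_four : 1 ≤ log 4 :=
  (le_log_iff_exp_le (by norm_num)).2 (exp_one_lt_d9.le.trans (by norm_num))

theorem IsPathIn.dist_le_of_bdist_le (hD : IsDomainIn D) (hγ : IsPathIn D x y γ)
    (hrec : Rectifiable γ) (hs : 0 ≤ s) (ht : t ≤ 1) (hδ : ∀ r ∈ Icc s t, bdist D (γ r) ≤ δ)
    {r : ℝ} (hr : r ∈ Icc s t) :
    dist (γ s) (γ r) ≤ 3 * δ * (dLength (apol D) γ s t + 1) := by
  have hδ₀ : 0 < 3 * δ := by
    have := (bdist_pos hD (hγ.2.1 ⟨hs, hr.1.trans (hr.2.trans ht)⟩)).trans_le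
      (hδ s ⟨le_rfl, hr.1.trans hr.2⟩)
    positivity
  set k := ⌊dist (γ s) (γ r) / (3 * δ)⌋₊
  have hk : k * (3 * δ) ≤ dist (γ s) (γ r) :=
    (le_div_iff₀ hδ₀).1 (Nat.floor_le (by positivity))
  have hk' : dist (γ s) (γ r) < (k + 1) * (3 * δ) :=
    (div_lt_iff₀ hδ₀).1 (Nat.lt_floor_add_one _)
  have hkM : (k : ℝ) ≤ dLength (apol D) γ s t :=
    calc (k : ℝ) ≤ k * log 4 := le_mul_of_one_le_right k.cast_nonneg one_le_log_four
      _ ≤ dLength (apol D) γ s r :=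
        hγ.nat_mul_log_four_le_dLength_apol hD hrec hs ht hδ k r hr hk
      _ ≤ dLength (apol D) γ s r + dLength (apol D) γ r t :=
        le_add_of_nonneg_right (hγ.dLength_apol_nonneg hD hrec (hs.trans hr.1) hr.2 ht)
      _ ≤ dLength (apol D) γ s t := dLength_add_dLength_le hr.1 hr.2
        (hγ.bddAbove_partitionSums_apol hD hrec hs ht)
  calc dist (γ s) (γ r) ≤ (k + 1) * (3 * δ) := hk'.le
    _ ≤ (dLength (apol D) γ s t + 1) * (3 * δ) := by gcongr
    _ = _ := by ring

end Chain

theorem diam_subarc_le_general {n : ℕ} (D : Set (Eucl n)) (hD : IsDomainIn D)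
    (c₂ : ℝ) (hc₂ : 1 < c₂)
    (h : ∀ x ∈ D, ∀ y ∈ D, innerApol D x y ≤ c₂ * jP D x y)
    (x y : Eucl n) (γ : ℝ → Eucl n)
    (hγ : IsPathIn D x y γ) (hrec : Rectifiable γ)
    (hopt : dLength (apol D) γ 0 1 = innerApol D x y)
    (s t : ℝ) (hs : s ∈ Set.Icc (0:ℝ) 1) (ht : t ∈ Set.Icc (0:ℝ) 1) (hst : s ≤ t)
    (huv : bdist D (γ s) ≤ bdist D (γ t))
    (hdv : bdist D (γ t) = 2 * bdist D (γ s))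
    (hw : ∀ r ∈ Set.Icc s t, bdist D (γ r) ≤ 2 * bdist D (γ s)) :
    Metric.diam (γ '' Set.Icc s t) ≤ 24 * ((⌊c₂⌋ : ℝ) + 1) * rhoD D (γ s) (γ t) := by
  set d := bdist D (γ s)
  set ρ := rhoD D (γ s) (γ t)
  set M := dLength (apol D) γ s t
  have hd : 0 < d := bdist_pos hD (hγ.2.1 hs)
  have hst' : s < t := hst.lt_of_ne (by rintro rfl; linarith)
  have hdρ : d ≤ ρ := by
    linarith [(isPathIn_subpath hγ hs.1 hst ht.2).bdist_sub_bdist_le_rhoD]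
  have hM : d * M ≤ c₂ * ρ := by
    have := (hγ.dLength_apol_le_innerApol hD hrec hopt hs.1 hst' ht.2).trans
      ((h _ (hγ.2.1 hs) _ (hγ.2.1 ht)).trans (mul_le_mul_of_nonneg_left
        (jP_le_rhoD_div huv hd (hd.le.trans hdρ)) (by linarith)))
    rwa [mul_div_assoc', le_div_iff₀ hd, mul_comm] at this
  have hball : γ '' Icc s t ⊆ closedBall (γ s) (3 * (2 * d) * (M + 1)) := by
    rintro _ ⟨r, hr, rfl⟩
    rw [mem_closedBall, dist_comm]
    exact hγ.dist_le_of_bdist_le hD hrec hs.1 ht.2 hw hr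
  have hM₀ : 0 ≤ M := hγ.dLength_apol_nonneg hD hrec hs.1 hst ht.2
  have hfloor : c₂ + 1 ≤ 2 * ((⌊c₂⌋ : ℝ) + 1) := by
    have : (0 : ℝ) ≤ ⌊c₂⌋ := by exact_mod_cast Int.floor_nonneg.2 (by linarith)
    linarith [Int.lt_floor_add_one c₂]
  calc diam (γ '' Icc s t) ≤ 2 * (3 * (2 * d) * (M + 1)) :=
        diam_le_of_subset_closedBall (mul_nonneg (by positivity) (by linarith)) hball
    _ = 12 * (d * M + d) := by ring
    _ ≤ 12 * ((c₂ + 1) * ρ) := by nlinarith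
    _ ≤ 24 * ((⌊c₂⌋ : ℝ) + 1) * ρ := by nlinarith

/-- Lemma 2.1(1): Suppose `α̃_D ≤ c₂ j'_D` on the Apollonian domain
`D ⊊ ℝⁿ` (`n ≥ 2`), `c₂ > 1`. Let `γ` be a path in `D` whose `α_D`-length equals the
Apollonian inner distance of its endpoints, and let `u = γ s`, `v = γ t` (`s ≤ t`) with
`d_D(u) ≤ d_D(v)`, `d_D(v) = 2 d_D(u)` and `d_D(w) ≤ 2 d_D(u)` for all `w ∈ γ[u,v]`.
Then `diam γ[u,v] ≤ 24([c₂]+1) ρ_D(u,v)`. -/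
theorem diam_subarc_le {n : ℕ} (hn : 2 ≤ n) (D : Set (Eucl n)) (hD : IsDomainIn D)
    (hA : IsApollonian D) (c₂ : ℝ) (hc₂ : 1 < c₂)
    (h : ∀ x ∈ D, ∀ y ∈ D, innerApol D x y ≤ c₂ * jP D x y)
    (x y : Eucl n) (hx : x ∈ D) (hy : y ∈ D) (γ : ℝ → Eucl n)
    (hγ : IsPathIn D x y γ) (hrec : Rectifiable γ)
    (hopt : dLength (apol D) γ 0 1 = innerApol D x y)
    (s t : ℝ) (hs : s ∈ Set.Icc (0:ℝ) 1) (ht : t ∈ Set.Icc (0:ℝ) 1) (hst : s ≤ t)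
    (huv : bdist D (γ s) ≤ bdist D (γ t))
    (hdv : bdist D (γ t) = 2 * bdist D (γ s))
    (hw : ∀ r ∈ Set.Icc s t, bdist D (γ r) ≤ 2 * bdist D (γ s)) :
    Metric.diam (γ '' Set.Icc s t) ≤ 24 * ((⌊c₂⌋ : ℝ) + 1) * rhoD D (γ s) (γ t) :=
  diam_subarc_le_general D hD c₂ hc₂ h x y γ hγ hrec hopt s t hs ht hst huv hdv hw
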